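/- arXiv:math/0601068 — 2 statements merged into one kernel-verified Lean document; each statement's English description precedes it below -/
import Mathlib

section
/- In the completed algebra of formal power series of planar trees, the series g(t) = t - Σ_{n≥2} c_n(t) (where c_n(t) denotes the n-corolla, i.e. ∨_n(t,...,t)) and f(t) = Σ_T T (sum over all planar trees T, viewed as polynomial functions T(t,...,t)) are mutually inverse for composition: f ∘ g = t and g ∘ f = t. -/
/-- Planar rooted trees. -/
inductive PTree : Type
  | leaf : PTree
  | graft : (k : ℕ) → (Fin (k + 2) → PTree) → PTree

namespace PTree

/-- Number of leaves of a planar rooted tree. -/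
noncomputable def leaves (t : PTree) : ℕ :=
  PTree.rec 1 (fun _ _ ih => ∑ i, ih i) t

/-- The `n`-corolla `∨_n(|,…,|)` (with `n = k + 2` leaves). -/
def corolla (k : ℕ) : PTree := .graft k fun _ => .leaf

/-- Substitute trees into the leaves of a tree: `plug t f` replaces the `i`-th leaf
of `t` (in left-to-right order) by the tree `f i`. -/
noncomputable def plug (t : PTree) : (ℕ → PTree) → PTree :=
  PTree.rec (motive := fun _ => (ℕ → PTree) → PTree)
    (fun f => f 0)
    (fun k c ih => fun f =>
      .graft k fun i => ih i fun m =>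
        f (m + ∑ j ∈ Finset.univ.filter (fun j => j < i), leaves (c j)))
    t

end PTree

namespace PTreeAux
open PTree

lemma leaves_leaf : leaves leaf = 1 := rfl
lemma leaves_graft (k c) : leaves (graft k c) = ∑ i, leaves (c i) := rfl
lemma plug_leaf (σ : ℕ → PTree) : plug leaf σ = σ 0 := rfl
lemma plug_graft (k c) (σ : ℕ → PTree) : plug (graft k c) σ =
    graft k fun i => plug (c i) fun m =>
      σ (m + ∑ j ∈ Finset.univ.filter (fun j => j < i), leaves (c j)) := rfl

def Off (w : ℕ → ℕ) (i : ℕ) : ℕ := ∑ j ∈ Finset.range i, w j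

lemma Off_succ (w i) : Off w (i+1) = Off w i + w i := Finset.sum_range_succ w i

lemma Off_mono (w) {a b : ℕ} (h : a ≤ b) : Off w a ≤ Off w b :=
  Finset.sum_le_sum_of_subset (Finset.range_subset_range.2 h)

def blk (w : ℕ → ℕ) (n m : ℕ) : ℕ := Nat.findGreatest (fun i => Off w i ≤ m) n

lemma blk_le (w n m) : blk w n m ≤ n := Nat.findGreatest_le n

lemma Off_blk_le (w n m) : Off w (blk w n m) ≤ m :=
  Nat.findGreatest_spec (P := fun i => Off w i ≤ m) (m := 0) (Nat.zero_le n) (Nat.zero_le m)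

lemma lt_Off_blk_add (w n m) (hm : m < Off w (n+1)) :
    m < Off w (blk w n m) + w (blk w n m) := by
  rcases eq_or_lt_of_le (blk_le w n m) with h | h
  · rw [h, ← Off_succ]; exact hm
  · have h5 := Nat.findGreatest_is_greatest (P := fun i => Off w i ≤ m) (k := blk w n m + 1)
      (Nat.lt_succ_self _) h
    simp only [not_le] at h5
    rw [Off_succ] at h5
    exact h5

lemma blk_eq (w : ℕ → ℕ) {n i m : ℕ} (hi : i ≤ n) (h1 : Off w i ≤ m)
    (h2 : m < Off w i + w i) : blk w n m = i := by
  refine le_antisymm ?_ (Nat.le_findGreatest hi h1)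
  by_contra hc
  push_neg at hc
  have h3 := Off_blk_le w n m
  have h4 : Off w (i+1) ≤ Off w (blk w n m) := Off_mono w hc
  rw [Off_succ] at h4
  omega

/-- Width function of a family of subtrees. -/
noncomputable def wT {k : ℕ} (c : Fin (k+2) → PTree) : ℕ → ℕ :=
  fun j => if h : j < k+2 then leaves (c ⟨j, h⟩) else 1

lemma off_eq {k : ℕ} (c : Fin (k+2) → PTree) (i : Fin (k+2)) :
    ∑ j ∈ Finset.univ.filter (fun j => j < i), leaves (c j) = Off (wT c) i.1 := by
  rw [Finset.sum_filter]
  have h1 : ∀ j : Fin (k+2), (if j < i then leaves (c j) else 0)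
      = if (j : ℕ) < (i : ℕ) then wT c j else 0 := by
    intro j
    simp only [wT, Fin.lt_def, dif_pos j.isLt]
  simp only [h1]
  rw [Fin.sum_univ_eq_sum_range (fun j => if j < (i : ℕ) then wT c j else 0) (k+2)]
  rw [← Finset.sum_filter, Off]
  refine Finset.sum_congr ?_ fun _ _ => rfl
  ext j
  simp only [Finset.mem_filter, Finset.mem_range]
  omega

lemma total_eq {k : ℕ} (c : Fin (k+2) → PTree) :
    leaves (graft k c) = Off (wT c) (k+2) := by
  rw [leaves_graft, Off]
  rw [← Fin.sum_univ_eq_sum_range (wT c) (k+2)]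
  exact Finset.sum_congr rfl fun j _ => by simp [wT, j.isLt]

lemma wT_coe {k : ℕ} (c : Fin (k+2) → PTree) (i : Fin (k+2)) :
    wT c i.1 = leaves (c i) := by simp [wT, i.isLt]

lemma off_add_le {k : ℕ} (c : Fin (k+2) → PTree) (i : Fin (k+2)) :
    Off (wT c) i.1 + leaves (c i) ≤ Off (wT c) (k+2) := by
  have h1 : Off (wT c) (i.1+1) ≤ Off (wT c) (k+2) := Off_mono _ i.isLt
  rw [Off_succ, wT_coe] at h1
  exact h1

lemma one_le_leaves (t : PTree) : 1 ≤ leaves t := by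
  induction t with
  | leaf => exact le_rfl
  | graft k c ih =>
    rw [leaves_graft]
    calc 1 ≤ leaves (c 0) := ih 0
    _ ≤ _ := Finset.single_le_sum (f := fun i => leaves (c i))
      (fun i _ => Nat.zero_le _) (Finset.mem_univ (0 : Fin (k+2)))

lemma plug_congr : ∀ (t : PTree) (σ σ' : ℕ → PTree),
    (∀ m < leaves t, σ m = σ' m) → plug t σ = plug t σ' := by
  intro t
  induction t with
  | leaf => intro σ σ' h; exact h 0 Nat.one_pos
  | graft k c ih =>
    intro σ σ' h
    rw [plug_graft, plug_graft]
    congr 1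
    funext i
    refine ih i _ _ fun m hm => ?_
    rw [off_eq]
    refine h _ ?_
    rw [total_eq]
    have := off_add_le c i
    omega

lemma plug_ne_leaf {k : ℕ} (c : Fin (k+2) → PTree) (σ : ℕ → PTree) :
    plug (graft k c) σ ≠ leaf := by rw [plug_graft]; exact fun h => PTree.noConfusion h

/-- The type of decompositions of `S`. -/
def D (S : PTree) : Type := {q : PTree × (ℕ → PTree) //
      PTree.plug q.1 q.2 = S ∧ ∀ m, q.1.leaves ≤ m → q.2 m = PTree.leaf}

def delta (S : PTree) : ℕ → PTree := fun m => if m = 0 then S else PTree.leaf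

def leafElt (S : PTree) : D S :=
  ⟨(PTree.leaf, delta S), by rw [plug_leaf]; rfl,
   fun m hm => by
    rw [leaves_leaf] at hm
    simp only [delta, if_neg (by omega : ¬ m = 0)]⟩

lemma eq_leafElt {S : PTree} (q : D S) (h : q.1.1 = PTree.leaf) : q = leafElt S := by
  obtain ⟨⟨T, σ⟩, hp, hn⟩ := q
  simp only at h
  subst h
  apply Subtype.ext
  simp only [leafElt]
  refine Prod.ext rfl ?_
  funext m
  match m with
  | 0 => rw [plug_leaf] at hp; simpa [delta] using hp
  | m+1 =>
    rw [hn (m+1) (by rw [leaves_leaf]; omega)]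
    simp [delta]

/-- Combine a family of plug-functions into one, with blocks of widths given by the
leaves of `T`. -/
noncomputable def combine {k : ℕ} (T : Fin (k+2) → PTree)
    (σf : Fin (k+2) → ℕ → PTree) : ℕ → PTree := fun m =>
  if h : m < Off (wT T) (k+2) then
    σf ⟨blk (wT T) (k+1) m, Nat.lt_succ_of_le (blk_le _ _ _)⟩
      (m - Off (wT T) (blk (wT T) (k+1) m))
  else PTree.leaf

lemma combine_eval {k : ℕ} (T : Fin (k+2) → PTree) (σf : Fin (k+2) → ℕ → PTree)
    (i : Fin (k+2)) (m : ℕ) (hm : m < leaves (T i)) :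
    combine T σf (m + Off (wT T) i.1) = σf i m := by
  have h1 : Off (wT T) i.1 ≤ m + Off (wT T) i.1 := Nat.le_add_left _ _
  have h2 : m + Off (wT T) i.1 < Off (wT T) i.1 + wT T i.1 := by
    rw [wT_coe]; omega
  have hlt : m + Off (wT T) i.1 < Off (wT T) (k+2) := by
    have h3 := off_add_le T i
    have hw := wT_coe T i
    omega
  have hblk : blk (wT T) (k+1) (m + Off (wT T) i.1) = i.1 :=
    blk_eq _ (Nat.lt_succ_iff.1 i.isLt) h1 h2
  simp only [combine, dif_pos hlt, hblk, Fin.eta, Nat.add_sub_cancel]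

lemma combine_eq_leaf {k : ℕ} (T : Fin (k+2) → PTree) (σf : Fin (k+2) → ℕ → PTree)
    (m : ℕ) (hm : Off (wT T) (k+2) ≤ m) : combine T σf m = PTree.leaf :=
  dif_neg (not_lt.2 hm)

lemma plug_combine {k : ℕ} (c : Fin (k+2) → PTree) (d : ∀ i, D (c i)) :
    plug (graft k (fun i => (d i).1.1))
      (combine (fun i => (d i).1.1) (fun i => (d i).1.2)) = graft k c := by
  rw [plug_graft]
  congr 1
  funext i
  have key : plug ((d i).1.1) (fun m =>
        combine (fun i => (d i).1.1) (fun i => (d i).1.2)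
          (m + ∑ j ∈ Finset.univ.filter (fun j => j < i), leaves ((d j).1.1)))
      = plug ((d i).1.1) ((d i).1.2) := by
    refine plug_congr _ _ _ fun m hm => ?_
    rw [off_eq (fun i => (d i).1.1) i]
    exact combine_eval _ _ i m hm
  rw [key, (d i).2.1]

/-- The inverse of the block-decomposition equivalence. -/
noncomputable def Ψ {k : ℕ} (c : Fin (k+2) → PTree) (d : ∀ i, D (c i)) :
    D (graft k c) :=
  ⟨(graft k (fun i => (d i).1.1), combine (fun i => (d i).1.1) (fun i => (d i).1.2)),
    plug_combine c d,
    fun m hm => by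
      show combine (fun i => (d i).1.1) (fun i => (d i).1.2) m = PTree.leaf
      refine combine_eq_leaf _ _ m ?_
      rw [← total_eq (fun i => (d i).1.1)]
      exact hm⟩

noncomputable def F {k : ℕ} (c : Fin (k+2) → PTree) :
    Unit ⊕ (∀ i, D (c i)) → D (graft k c) :=
  Sum.elim (fun _ => leafElt (graft k c)) (Ψ c)

lemma F_injective {k : ℕ} (c : Fin (k+2) → PTree) : Function.Injective (F c) := by
  intro x y h
  match x, y with
  | Sum.inl a, Sum.inl b => rfl
  | Sum.inl a, Sum.inr d =>
    exfalso
    have h1 := congrArg (fun q => q.1.1) h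
    simp only [F, Sum.elim_inl, Sum.elim_inr, leafElt, Ψ] at h1
    all_goals exact PTree.noConfusion h1
  | Sum.inr d, Sum.inl a =>
    exfalso
    have h1 := congrArg (fun q => q.1.1) h
    simp only [F, Sum.elim_inl, Sum.elim_inr, leafElt, Ψ] at h1
    all_goals exact PTree.noConfusion h1
  | Sum.inr d, Sum.inr d' =>
    simp only [F, Sum.elim_inr] at h
    have h1 := congrArg (fun q => q.1.1) h
    have h2 := congrArg (fun q => q.1.2) h
    simp only [Ψ] at h1 h2
    have hT : (fun i => (d i).1.1) = (fun i => (d' i).1.1) :=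
      eq_of_heq (PTree.graft.inj h1).2
    congr 1
    funext i
    apply Subtype.ext
    refine Prod.ext (congrFun hT i) ?_
    funext m
    by_cases hm : m < leaves ((d i).1.1)
    · have e1 : combine (fun i => (d i).1.1) (fun i => (d i).1.2)
          (m + Off (wT fun i => (d i).1.1) i.1) = (d i).1.2 m :=
        combine_eval _ _ i m hm
      have e2 : combine (fun i => (d' i).1.1) (fun i => (d' i).1.2)
          (m + Off (wT fun i => (d' i).1.1) i.1) = (d' i).1.2 m :=
        combine_eval _ _ i m (by rw [← congrFun hT i]; exact hm)
      rw [← e1, ← e2, h2, hT]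
    · rw [(d i).2.2 m (not_lt.1 hm), (d' i).2.2 m (by
        rw [← congrFun hT i]; exact not_lt.1 hm)]

lemma F_surjective {k : ℕ} (c : Fin (k+2) → PTree) : Function.Surjective (F c) := by
  rintro ⟨⟨T, σ⟩, hp, hn⟩
  match T with
  | PTree.leaf =>
    exact ⟨Sum.inl Unit.unit, (eq_leafElt ⟨(PTree.leaf, σ), hp, hn⟩ rfl).symm⟩
  | PTree.graft k' c' =>
    rw [plug_graft] at hp
    injection hp with hk hc
    subst hk
    have hc' := eq_of_heq hc
    -- the children decompositions
    refine ⟨Sum.inr fun i => ⟨(c' i, fun m =>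
      if m < leaves (c' i) then σ (m + Off (wT c') i.1) else PTree.leaf), ?_, ?_⟩, ?_⟩
    · have key : plug (c' i) (fun m =>
          if m < leaves (c' i) then σ (m + Off (wT c') i.1) else PTree.leaf)
          = plug (c' i) (fun m => σ (m + Off (wT c') i.1)) :=
        plug_congr _ _ _ fun m hm => if_pos hm
      rw [key, ← off_eq c' i]
      exact congrFun hc' i
    · intro m hm
      exact if_neg (not_lt.2 hm)
    · apply Subtype.ext
      refine Prod.ext rfl ?_
      show combine c' (fun i m => if m < leaves (c' i) then σ (m + Off (wT c') i.1) else PTree.leaf) = σ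
      funext m
      by_cases hm : m < Off (wT c') (k'+2)
      · set i0 : Fin (k'+2) := ⟨blk (wT c') (k'+1) m, Nat.lt_succ_of_le (blk_le _ _ _)⟩
        have hle : Off (wT c') i0.1 ≤ m := Off_blk_le _ _ _
        have hlt : m < Off (wT c') i0.1 + wT c' i0.1 := lt_Off_blk_add _ _ _ hm
        rw [wT_coe] at hlt
        have hsub : m - Off (wT c') i0.1 < leaves (c' i0) := by omega
        simp only [combine, dif_pos hm]
        rw [if_pos hsub, Nat.sub_add_cancel hle]
      · rw [combine_eq_leaf _ _ m (not_lt.1 hm)]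
        refine (hn m ?_).symm
        rw [total_eq c']
        exact not_lt.1 hm

lemma eq_leafElt_of_leaf (q : D PTree.leaf) : q = leafElt PTree.leaf := by
  refine eq_leafElt q ?_
  obtain ⟨⟨T, σ⟩, hp, hn⟩ := q
  match T with
  | PTree.leaf => rfl
  | PTree.graft k' c' => exact absurd hp (plug_ne_leaf c' σ)

lemma finite_D : ∀ S : PTree, Finite (D S) := by
  intro S
  induction S with
  | leaf =>
    have huniq := eq_leafElt_of_leaf
    have : Subsingleton (D PTree.leaf) :=
      ⟨fun a b => (huniq a).trans (huniq b).symm⟩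
    exact Finite.of_subsingleton
  | graft k c ih =>
    have : ∀ i, Finite (D (c i)) := ih
    exact Finite.of_surjective (F c) (F_surjective c)


lemma prod_Off {M : Type*} [CommMonoid M] (w : ℕ → ℕ) (g : ℕ → M) :
    ∀ N, ∏ m ∈ Finset.range (Off w N), g m
      = ∏ i ∈ Finset.range N, ∏ m ∈ Finset.range (w i), g (m + Off w i)
  | 0 => by simp [Off]
  | (N+1) => by
    rw [Off_succ, Finset.prod_range_add, prod_Off w g N, Finset.prod_range_succ]
    congr 1
    exact Finset.prod_congr rfl fun m _ => by rw [Nat.add_comm]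

lemma exists_corolla_iff (k : ℕ) (c : Fin (k+2) → PTree) :
    (∃ k', PTree.graft k c = PTree.corolla k') ↔ ∀ i, c i = PTree.leaf := by
  constructor
  · rintro ⟨k', h⟩ i
    rw [PTree.corolla] at h
    obtain ⟨hk, hc⟩ := PTree.graft.inj h
    subst hk
    exact congrFun (eq_of_heq hc) i
  · intro h
    refine ⟨k, ?_⟩
    rw [PTree.corolla]
    congr 1
    funext i
    exact h i

end PTreeAux


variable (K : Type*) [Field K]

-- An element of the completed free infinite magmatic algebra `Mag^∞(K)^∧` on one
-- generator is a coefficient function `PTree → K`.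
open Classical in
/-- Composition (substitution) of formal power series of planar trees:
the coefficient of `S` in `φ ∘ ψ` is `Σ φ(T)·ψ(S_1)⋯ψ(S_k)` over all ways of
writing `S = T[S_1,…,S_k]` (the `S_i` plugged into the leaves of `T`). -/
noncomputable def compSeries (φ ψ : PTree → K) : PTree → K := fun S =>
  ∑ᶠ p : {q : PTree × (ℕ → PTree) //
      PTree.plug q.1 q.2 = S ∧ ∀ m, q.1.leaves ≤ m → q.2 m = PTree.leaf},
    φ p.1.1 * ∏ i ∈ Finset.range p.1.1.leaves, ψ (p.1.2 i)

open Classical in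
/-- The generator `t = |` as a series. -/
noncomputable def tSeries : PTree → K := fun S => if S = PTree.leaf then 1 else 0

open Classical in
/-- `g(t) = t - Σ_{n ≥ 2} c_n(t)`, the generator minus all corollas. -/
noncomputable def gSeries : PTree → K := fun T =>
  if T = PTree.leaf then 1 else if ∃ k, T = PTree.corolla k then -1 else 0

/-- `f(t) = Σ_T T`, the sum of all planar trees. -/
noncomputable def fSeries : PTree → K := fun _ => 1

namespace PTreeAux
open PTree

lemma compSeries_apply (φ ψ : PTree → K) (S : PTree) :
    compSeries K φ ψ S
      = ∑ᶠ p : D S, φ p.1.1 * ∏ i ∈ Finset.range p.1.1.leaves, ψ (p.1.2 i) := rfl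

lemma compSeries_leaf (φ ψ : PTree → K) :
    compSeries K φ ψ PTree.leaf = φ PTree.leaf * ψ PTree.leaf := by
  rw [compSeries_apply]
  letI : Unique (D PTree.leaf) := ⟨⟨leafElt _⟩, eq_leafElt_of_leaf⟩
  rw [finsum_unique]
  show φ PTree.leaf * ∏ i ∈ Finset.range (leaves PTree.leaf), ψ (delta PTree.leaf i) = _
  rw [leaves_leaf, Finset.prod_range_one]
  rfl

lemma compSeries_graft (φ ψ : PTree → K) (k : ℕ) (c : Fin (k+2) → PTree) :
    compSeries K φ ψ (graft k c) =
      φ PTree.leaf * ψ (graft k c) +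
      ∑ᶠ d : ∀ i : Fin (k+2), D (c i),
        φ (graft k fun i => (d i).1.1) *
          ∏ i : Fin (k+2), ∏ m ∈ Finset.range (leaves ((d i).1.1)), ψ ((d i).1.2 m) := by
  haveI : ∀ i, Finite (D (c i)) := fun i => finite_D _
  haveI : Finite (D (graft k c)) := finite_D _
  letI : Fintype (D (graft k c)) := Fintype.ofFinite _
  letI : ∀ i, Fintype (D (c i)) := fun i => Fintype.ofFinite _
  rw [compSeries_apply, finsum_eq_sum_of_fintype, finsum_eq_sum_of_fintype]
  rw [← Fintype.sum_bijective (F c) ⟨F_injective c, F_surjective c⟩ _ _ (fun x => rfl)]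
  rw [Fintype.sum_sum_type]
  congr 1
  · rw [Fintype.sum_unique]
    show φ PTree.leaf * ∏ i ∈ Finset.range (leaves PTree.leaf), ψ (delta (graft k c) i) = _
    rw [leaves_leaf, Finset.prod_range_one]
    rfl
  · refine Finset.sum_congr rfl fun d _ => ?_
    show φ (graft k fun i => (d i).1.1) *
        ∏ m ∈ Finset.range (leaves (graft k fun i => (d i).1.1)),
          ψ (combine (fun i => (d i).1.1) (fun i => (d i).1.2) m) = _
    congr 1
    rw [total_eq, prod_Off]
    rw [← Fin.prod_univ_eq_prod_range (fun i =>
      ∏ m ∈ Finset.range (wT (fun i => (d i).1.1) i),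
        ψ (combine (fun i => (d i).1.1) (fun i => (d i).1.2)
          (m + Off (wT fun i => (d i).1.1) i))) (k+2)]
    refine Finset.prod_congr rfl fun i _ => ?_
    rw [wT_coe (fun i => (d i).1.1) i]
    refine Finset.prod_congr rfl fun m hm => ?_
    rw [combine_eval (fun i => (d i).1.1) (fun i => (d i).1.2) i m
      (Finset.mem_range.1 hm)]

lemma comp_fg : ∀ S : PTree, compSeries K (fSeries K) (gSeries K) S = tSeries K S := by
  intro S
  induction S with
  | leaf =>
    rw [compSeries_leaf]
    simp [fSeries, gSeries, tSeries]
  | graft k c ih =>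
    rw [compSeries_graft]
    haveI : ∀ i, Finite (D (c i)) := fun i => finite_D _
    letI : ∀ i, Fintype (D (c i)) := fun i => Fintype.ofFinite _
    rw [finsum_eq_sum_of_fintype]
    have hstep : ∑ d : ∀ i : Fin (k+2), D (c i),
        fSeries K (graft k fun i => (d i).1.1) *
          ∏ i : Fin (k+2), ∏ m ∈ Finset.range (leaves ((d i).1.1)),
            gSeries K ((d i).1.2 m)
        = ∏ i : Fin (k+2), compSeries K (fSeries K) (gSeries K) (c i) := by
      have h1 : ∀ i : Fin (k+2), compSeries K (fSeries K) (gSeries K) (c i)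
          = ∑ x : D (c i), ∏ m ∈ Finset.range (leaves x.1.1), gSeries K (x.1.2 m) := by
        intro i
        rw [compSeries_apply, finsum_eq_sum_of_fintype]
        exact Finset.sum_congr rfl fun x _ => by rw [fSeries, one_mul]
      simp only [h1]
      rw [Finset.prod_univ_sum]
      rw [Fintype.piFinset_univ]
      exact Finset.sum_congr rfl fun d _ => by rw [fSeries, one_mul]
    rw [hstep]
    simp only [ih]
    show fSeries K PTree.leaf * gSeries K (graft k c)
        + ∏ i : Fin (k+2), tSeries K (c i) = tSeries K (graft k c)
    rw [fSeries, one_mul]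
    rw [show tSeries K (graft k c) = 0 from
      if_neg (fun h => PTree.noConfusion h)]
    by_cases hall : ∀ i, c i = PTree.leaf
    · rw [gSeries, if_neg (fun h => PTree.noConfusion h),
        if_pos ((exists_corolla_iff k c).2 hall)]
      have : ∀ i : Fin (k+2), tSeries K (c i) = 1 := fun i => by
        rw [tSeries, if_pos (hall i)]
      rw [Finset.prod_congr rfl fun i _ => this i, Finset.prod_const_one]
      ring
    · push_neg at hall
      obtain ⟨i0, hi0⟩ := hall
      rw [gSeries, if_neg (fun h => PTree.noConfusion h),
        if_neg (fun h => hi0 (((exists_corolla_iff k c).1 h) i0))]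
      rw [Finset.prod_eq_zero (Finset.mem_univ i0)
        (by rw [tSeries, if_neg hi0])]
      ring

lemma comp_gf : ∀ S : PTree, compSeries K (gSeries K) (fSeries K) S = tSeries K S := by
  intro S
  cases S with
  | leaf =>
    rw [compSeries_leaf]
    simp [fSeries, gSeries, tSeries]
  | graft k c =>
    rw [compSeries_graft]
    haveI : ∀ i, Finite (D (c i)) := fun i => finite_D _
    letI : ∀ i, Fintype (D (c i)) := fun i => Fintype.ofFinite _
    rw [finsum_eq_sum_of_fintype]
    have hval : ∀ d : ∀ i : Fin (k+2), D (c i),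
        gSeries K (graft k fun i => (d i).1.1) *
          ∏ i : Fin (k+2), ∏ m ∈ Finset.range (leaves ((d i).1.1)),
            fSeries K ((d i).1.2 m)
        = gSeries K (graft k fun i => (d i).1.1) := by
      intro d
      simp [fSeries]
    simp only [hval]
    rw [Finset.sum_eq_single (fun i => leafElt (c i))]
    · rw [show gSeries K (graft k fun i => (leafElt (c i)).1.1) = -1 from ?_]
      · rw [gSeries, if_pos rfl, fSeries]
        rw [show tSeries K (graft k c) = 0 from if_neg (fun h => PTree.noConfusion h)]
        ring
      · rw [gSeries, if_neg (fun h => PTree.noConfusion h),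
          if_pos ((exists_corolla_iff k (fun i => (leafElt (c i)).1.1)).2
            fun i => rfl)]
    · intro d _ hd
      rw [gSeries, if_neg (fun h => PTree.noConfusion h), if_neg]
      intro hcor
      apply hd
      funext i
      exact eq_leafElt (d i)
        (((exists_corolla_iff k (fun i => (d i).1.1)).1 hcor) i)
    · intro h
      exact absurd (Finset.mem_univ _) h

end PTreeAux

/-- In the completed algebra of formal power series of planar trees,
`g(t) = t - Σ_{n≥2} c_n(t)` and `f(t) = Σ_T T` are mutually inverse for
composition: `f ∘ g = t` and `g ∘ f = t`. -/
theorem fSeries_gSeries_comp_inverse :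
    compSeries K (fSeries K) (gSeries K) = tSeries K ∧
    compSeries K (gSeries K) (fSeries K) = tSeries K :=
  ⟨funext (PTreeAux.comp_fg K), funext (PTreeAux.comp_gf K)⟩
end

section
/- In the completed free m-magmatic algebra on one generator, the finite series g(t) = t - Σ_{n=2}^{m} c_n(t) (c_n the n-corolla) and the series f(t) = Σ_T T, summed over all m-ary planar trees T, are mutually inverse for composition. -/
variable (K : Type*) [Field K]

/-- `Arity m t`: every internal vertex of `t` has between 2 and `m` children. -/
def PTree.Arity (m : ℕ) (t : PTree) : Prop :=
  PTree.rec True (fun k _ ih => k + 2 ≤ m ∧ ∀ i, ih i) t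

open Classical in
/-- `g(t) = t - Σ_{n=2}^{m} c_n(t)`, the generator minus the corollas of arity at
most `m`, in the completed free `m`-magmatic algebra. -/
noncomputable def gSeriesM (m : ℕ) : PTree → K := fun T =>
  if T = PTree.leaf then 1
  else if ∃ k, k + 2 ≤ m ∧ T = PTree.corolla k then -1 else 0

open Classical in
/-- `f(t) = Σ_T T`, the sum of all `m`-ary planar trees. -/
noncomputable def fSeriesM (m : ℕ) : PTree → K := fun T =>
  if PTree.Arity m T then 1 else 0

namespace Off
variable {N : ℕ} (n : Fin N → ℕ)
open Finset
def off (i : Fin N) : ℕ := ∑ j ∈ univ.filter (fun j => j < i), n j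

lemma off_add (i : Fin N) : off n i + n i = ∑ j ∈ univ.filter (fun j => j ≤ i), n j := by
  have h : univ.filter (fun j => j ≤ i) = insert i (univ.filter (fun j => j < i)) := by
    ext j
    simp only [Finset.mem_filter, Finset.mem_univ, true_and, Finset.mem_insert]
    rw [le_iff_lt_or_eq]
    tauto
  rw [h, Finset.sum_insert (by simp), off, add_comm]

lemma off_add_le_total (i : Fin N) : off n i + n i ≤ ∑ j, n j := by
  rw [off_add]; exact Finset.sum_le_sum_of_subset (by simp)

lemma off_add_le_off {i i' : Fin N} (h : i < i') : off n i + n i ≤ off n i' := by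
  rw [off_add]
  exact Finset.sum_le_sum_of_subset (fun j hj => by
    simp only [mem_filter, mem_univ, true_and] at *; exact lt_of_le_of_lt hj h)

lemma exists_idx {m : ℕ} (hm : m < ∑ j, n j) :
    ∃ i, off n i ≤ m ∧ m < off n i + n i := by
  have hN : 0 < N := by
    by_contra h
    simp only [not_lt, Nat.le_zero] at h
    subst h
    simp at hm
  set s : Finset (Fin N) := univ.filter (fun i => off n i ≤ m) with hs
  have h0 : (⟨0, hN⟩ : Fin N) ∈ s := by
    simp only [hs, mem_filter, mem_univ, true_and, off]
    have : univ.filter (fun j : Fin N => j < ⟨0, hN⟩) = ∅ := by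
      ext j; simp [Fin.lt_def]
    show (⟨0, hN⟩ : Fin N) ∈ univ.filter (fun i => off n i ≤ m)
    rw [mem_filter, off, this]; simp
  have hne : s.Nonempty := ⟨_, h0⟩
  refine ⟨s.max' hne, (mem_filter.mp (s.max'_mem hne)).2, ?_⟩
  by_contra hcon
  push_neg at hcon
  set j := s.max' hne
  by_cases hj : j.val + 1 < N
  · have : (⟨j.val + 1, hj⟩ : Fin N) ∈ s := by
      simp only [hs, mem_filter, mem_univ, true_and]
      refine le_trans (le_of_eq ?_) hcon
      rw [off_add, off]
      refine Finset.sum_congr ?_ (fun _ _ => rfl)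
      ext l
      simp only [Finset.mem_filter, Finset.mem_univ, true_and, Fin.lt_def, Fin.le_def]
      omega
    have := s.le_max' _ this
    simp [j, Fin.le_def] at this
  · have hlast : ∀ l : Fin N, l ≤ j := by
      intro l
      have := l.isLt
      simp only [Fin.le_def]
      omega
    have : ∑ l, n l ≤ m := by
      refine le_trans (le_of_eq ?_) hcon
      rw [off_add]
      refine Finset.sum_congr ?_ (fun _ _ => rfl)
      symm
      apply Finset.filter_true_of_mem
      intro l _; exact hlast l
    omega

lemma idx_unique {m : ℕ} {i i' : Fin N} (h : off n i ≤ m ∧ m < off n i + n i)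
    (h' : off n i' ≤ m ∧ m < off n i' + n i') : i = i' := by
  rcases lt_trichotomy i i' with hl | he | hl
  · exact absurd (le_trans (off_add_le_off n hl) h'.1) (by omega)
  · exact he
  · exact absurd (le_trans (off_add_le_off n hl) h.1) (by omega)
end Off

namespace PTree
open Finset

@[simp] lemma leaves_leaf : leaves leaf = 1 := rfl
@[simp] lemma leaves_graft (k c) : leaves (graft k c) = ∑ i, leaves (c i) := rfl
@[simp] lemma plug_leaf (f) : plug leaf f = f 0 := rfl
@[simp] lemma plug_graft (k c f) : plug (graft k c) f =
    graft k (fun i => plug (c i) fun m =>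
      f (m + ∑ j ∈ Finset.univ.filter (fun j => j < i), leaves (c j))) := rfl

noncomputable def catf {N : ℕ} (n : Fin N → ℕ) (g : Fin N → ℕ → PTree) : ℕ → PTree :=
  fun m =>
    if h : ∃ i, Off.off n i ≤ m ∧ m < Off.off n i + n i then
      g h.choose (m - Off.off n h.choose) else .leaf

lemma catf_eval {N : ℕ} (n : Fin N → ℕ) (g : Fin N → ℕ → PTree) {i : Fin N} {r : ℕ}
    (hr : r < n i) : catf n g (r + Off.off n i) = g i r := by
  have hi : Off.off n i ≤ r + Off.off n i ∧ r + Off.off n i < Off.off n i + n i := by omega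
  have h : ∃ i', Off.off n i' ≤ r + Off.off n i ∧ r + Off.off n i < Off.off n i' + n i' :=
    ⟨i, hi⟩
  rw [catf, dif_pos h]
  have : h.choose = i := Off.idx_unique n h.choose_spec hi
  rw [this]
  congr 1
  omega

lemma catf_top {N : ℕ} (n : Fin N → ℕ) (g : Fin N → ℕ → PTree) {m : ℕ}
    (hm : ∑ j, n j ≤ m) : catf n g m = .leaf := by
  rw [catf, dif_neg]
  rintro ⟨i, h1, h2⟩
  have := Off.off_add_le_total n i
  omega

lemma plug_congr {t : PTree} {f f' : ℕ → PTree} (h : ∀ m < leaves t, f m = f' m) :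
    plug t f = plug t f' := by
  induction t generalizing f f' with
  | leaf => exact h 0 (by simp)
  | graft k c ih =>
      simp only [plug_graft]
      congr 1
      funext i
      refine ih i ?_
      intro m hm
      refine h _ ?_
      have h1 : (∑ j ∈ Finset.univ.filter (fun j => j < i), leaves (c j)) + leaves (c i)
          ≤ ∑ j, leaves (c j) := Off.off_add_le_total (fun j => leaves (c j)) i
      simp only [leaves_graft]
      omega

/-- The set of decompositions of `S`. -/
abbrev Decomp (S : PTree) := {q : PTree × (ℕ → PTree) //
      PTree.plug q.1 q.2 = S ∧ ∀ m, q.1.leaves ≤ m → q.2 m = PTree.leaf}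

/-- The trivial decomposition `S = |[S]`. -/
noncomputable def dLeaf (S : PTree) : Decomp S :=
  ⟨(leaf, fun m => if m = 0 then S else leaf), by simp, by
    intro m hm
    have h1 : 1 ≤ m := hm
    show (if m = 0 then S else leaf) = leaf
    rw [if_neg (by omega)]⟩

lemma eq_dLeaf {S : PTree} (e : Decomp S) (h : e.1.1 = leaf) : e = dLeaf S := by
  obtain ⟨⟨T, f⟩, hp, hn⟩ := e
  obtain rfl : T = leaf := h
  simp only [plug_leaf] at hp
  apply Subtype.ext
  simp only [dLeaf]
  refine Prod.ext rfl ?_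
  funext m
  rcases Nat.eq_zero_or_pos m with h0 | h0
  · subst h0; simpa using hp
  · have := hn m (show 1 ≤ m by omega)
    dsimp only at this
    show f m = (if m = 0 then S else leaf)
    rw [this, if_neg (by omega : ¬ m = 0)]

lemma decomp_leaf_fst (e : Decomp leaf) : e.1.1 = leaf := by
  obtain ⟨⟨T, f⟩, hp, hn⟩ := e
  cases T with
  | leaf => rfl
  | graft k c => simp only [plug_graft] at hp; exact absurd hp (by simp)

section Fwd
variable {k : ℕ} {c : Fin (k + 2) → PTree}

/-- Assemble a decomposition of `graft k c` from decompositions of the branches. -/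
noncomputable def fwd (d : ∀ i, Decomp (c i)) : Decomp (graft k c) := by
  refine ⟨(graft k (fun i => (d i).1.1),
    catf (fun i => leaves (d i).1.1) (fun i => (d i).1.2)), ?_, ?_⟩
  · simp only [plug_graft]
    congr 1
    funext i
    refine Eq.trans ?_ (d i).2.1
    apply plug_congr
    intro m hm
    exact catf_eval (fun i => leaves (d i).1.1) (fun i => (d i).1.2) hm
  · intro m hm
    simp only [leaves_graft] at hm
    exact catf_top (fun i => leaves (d i).1.1) (fun i => (d i).1.2) hm

lemma fwd_fst (d : ∀ i, Decomp (c i)) : (fwd d).1.1 = graft k (fun i => (d i).1.1) := rfl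

lemma fwd_snd (d : ∀ i, Decomp (c i)) :
    (fwd d).1.2 = catf (fun i => leaves (d i).1.1) (fun i => (d i).1.2) := rfl

lemma fwd_injective : Function.Injective (fwd (c := c)) := by
  intro d d' h
  have h1 := congrArg (fun e => e.1.1) h
  have h2 := congrArg (fun e => e.1.2) h
  simp only [fwd, graft.injEq, heq_eq_eq, true_and] at h1
  have hT : ∀ i, (d i).1.1 = (d' i).1.1 := fun i => congrFun h1 i
  have hn : (fun i => leaves (d i).1.1) = (fun i => leaves (d' i).1.1) := by
    funext i; rw [hT i]
  funext i
  apply Subtype.ext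
  refine Prod.ext (hT i) ?_
  funext r
  rcases lt_or_ge r (leaves (d i).1.1) with hr | hr
  · have e1 : catf (fun i => leaves (d i).1.1) (fun i => (d i).1.2)
        (r + Off.off (fun i => leaves (d i).1.1) i) = (d i).1.2 r := catf_eval _ _ hr
    have hr' : r < leaves (d' i).1.1 := by rw [← hT i]; exact hr
    have e2 : catf (fun i => leaves (d' i).1.1) (fun i => (d' i).1.2)
        (r + Off.off (fun i => leaves (d' i).1.1) i) = (d' i).1.2 r := catf_eval _ _ hr'
    simp only [fwd] at h2
    rw [← e1, ← e2, h2, hn]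
  · rw [(d i).2.2 r hr, (d' i).2.2 r (by rwa [← hT i])]

lemma fwd_surjective (e : Decomp (graft k c)) (hne : e.1.1 ≠ leaf) :
    ∃ d, fwd d = e := by
  obtain ⟨⟨T, f⟩, hp, hn⟩ := e
  dsimp only at hne hp hn
  cases T with
  | leaf => exact absurd rfl hne
  | graft k' T' =>
      simp only [plug_graft, graft.injEq] at hp
      obtain ⟨rfl, hp⟩ := hp
      rw [heq_eq_eq] at hp
      have hcomp : ∀ i, plug (T' i) (fun m =>
          f (m + ∑ j ∈ Finset.univ.filter (fun j => j < i), leaves (T' j))) = c i :=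
        fun i => congrFun hp i
      set n : Fin (k' + 2) → ℕ := fun i => leaves (T' i) with hn'
      refine ⟨fun i => ⟨(T' i, fun m => if m < n i then f (m + Off.off n i) else leaf),
        ?_, ?_⟩, ?_⟩
      · rw [← hcomp i]
        apply plug_congr
        intro m hm
        have hm2 : m < n i := hm
        show (if m < n i then f (m + Off.off n i) else leaf) = _
        rw [if_pos hm2]
        rfl
      · intro m hm
        have hm' : n i ≤ m := hm
        show (if m < n i then f (m + Off.off n i) else leaf) = leaf
        rw [if_neg (by omega)]
      · apply Subtype.ext
        refine Prod.ext rfl ?_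
        dsimp only [fwd]
        funext m
        rcases lt_or_ge m (∑ j, n j) with hm | hm
        · obtain ⟨i, hi1, hi2⟩ := Off.exists_idx n hm
          have hrepr : m = (m - Off.off n i) + Off.off n i := by omega
          rw [hrepr, catf_eval _ _ (by omega : m - Off.off n i < n i)]
          show (if m - Off.off n i < n i then f (m - Off.off n i + Off.off n i) else leaf) = _
          rw [if_pos (by omega : m - Off.off n i < n i)]
        · rw [catf_top _ _ hm, hn m (by simpa [leaves_graft] using hm)]
end Fwd
end PTree
namespace PTree
open Finset

lemma finite_decomp (S : PTree) : Finite (Decomp S) := by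
  induction S with
  | leaf =>
      exact Finite.of_surjective (fun _ : PUnit => dLeaf leaf)
        (fun e => ⟨PUnit.unit, (eq_dLeaf e (decomp_leaf_fst e)).symm⟩)
  | graft k c ih =>
      haveI : ∀ i, Finite (Decomp (c i)) := ih
      haveI : Finite (∀ i, Decomp (c i)) := Pi.finite
      haveI : Fintype (∀ i, Decomp (c i)) := Fintype.ofFinite _
      refine Finite.of_surjective
        (fun o : Option (∀ i, Decomp (c i)) => o.elim (dLeaf _) fwd) ?_
      intro e
      by_cases h : e.1.1 = leaf
      · exact ⟨none, (eq_dLeaf e h).symm⟩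
      · obtain ⟨d, hd⟩ := fwd_surjective e h
        exact ⟨some d, hd⟩

lemma prod_range_sum_split {M : Type*} [CommMonoid M] {N : ℕ} (n : Fin N → ℕ) (F : ℕ → M) :
    ∏ i ∈ Finset.range (∑ j, n j), F i
      = ∏ j, ∏ r ∈ Finset.range (n j), F (r + Off.off n j) := by
  classical
  have hbU : Finset.range (∑ j, n j) =
      Finset.univ.biUnion (fun j => Finset.Ico (Off.off n j) (Off.off n j + n j)) := by
    ext m
    simp only [Finset.mem_range, Finset.mem_biUnion, Finset.mem_univ, true_and, Finset.mem_Ico]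
    constructor
    · exact fun hm => Off.exists_idx n hm
    · rintro ⟨j, h1, h2⟩; have := Off.off_add_le_total n j; omega
  rw [hbU, Finset.prod_biUnion]
  · refine Finset.prod_congr rfl fun j _ => ?_
    rw [Finset.prod_Ico_eq_prod_range]
    have : Off.off n j + n j - Off.off n j = n j := by omega
    rw [this]
    exact Finset.prod_congr rfl fun r _ => by rw [add_comm]
  · intro a _ b _ hab
    simp only [Function.onFun]
    rw [Finset.disjoint_left]
    intro m hma hmb
    simp only [Finset.mem_Ico] at hma hmb
    exact hab (Off.idx_unique n hma hmb)

variable {K : Type*} [Field K]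

lemma prod_fwd (ψ : PTree → K) {k : ℕ} {c : Fin (k + 2) → PTree} (d : ∀ i, Decomp (c i)) :
    ∏ i ∈ Finset.range (leaves (fwd d).1.1), ψ ((fwd d).1.2 i)
      = ∏ j, ∏ r ∈ Finset.range (leaves (d j).1.1), ψ ((d j).1.2 r) := by
  rw [fwd_fst, fwd_snd, leaves_graft,
    prod_range_sum_split (fun i => leaves (d i).1.1)
      (fun i => ψ (catf (fun i => leaves (d i).1.1) (fun i => (d i).1.2) i))]
  exact Finset.prod_congr rfl fun j _ => Finset.prod_congr rfl fun r hr =>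
    congrArg ψ (catf_eval _ _ (Finset.mem_range.mp hr))

end PTree

section CompLemmas
open PTree Finset
variable {K : Type*} [Field K]

lemma compSeries_apply (φ ψ : PTree → K) (S : PTree) : compSeries K φ ψ S =
    ∑ᶠ p : Decomp S, φ p.1.1 * ∏ i ∈ Finset.range p.1.1.leaves, ψ (p.1.2 i) := rfl

lemma compSeries_leaf (φ ψ : PTree → K) : compSeries K φ ψ leaf = φ leaf * ψ leaf := by
  rw [compSeries_apply,
    finsum_eq_single _ (dLeaf leaf) (fun e he => absurd (eq_dLeaf e (decomp_leaf_fst e)) he)]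
  simp [dLeaf]

lemma compSeries_graft (φ ψ : PTree → K) (k : ℕ) (c : Fin (k + 2) → PTree) :
    compSeries K φ ψ (graft k c) = φ leaf * ψ (graft k c) +
      ∑ᶠ d : ∀ i, Decomp (c i), φ (graft k (fun i => (d i).1.1)) *
        ∏ j, ∏ r ∈ Finset.range (leaves (d j).1.1), ψ ((d j).1.2 r) := by
  classical
  haveI : ∀ i, Finite (Decomp (c i)) := fun i => finite_decomp (c i)
  haveI : Finite (Decomp (graft k c)) := finite_decomp _
  haveI : Fintype (Decomp (graft k c)) := Fintype.ofFinite _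
  haveI : ∀ i, Fintype (Decomp (c i)) := fun i => Fintype.ofFinite _
  rw [compSeries_apply, finsum_eq_sum_of_fintype, finsum_eq_sum_of_fintype]
  have hbij : Function.Bijective
      (fun o : Option (∀ i, Decomp (c i)) => o.elim (dLeaf (graft k c)) fwd) := by
    constructor
    · intro o o' h
      match o, o' with
      | none, none => rfl
      | none, some d' =>
          exact absurd (congrArg (fun e => e.1.1) h)
            (by simp only [Option.elim, dLeaf, fwd_fst]; exact fun hc => PTree.noConfusion hc)
      | some d, none =>
          exact absurd (congrArg (fun e => e.1.1) h)
            (by simp only [Option.elim, dLeaf, fwd_fst]; exact fun hc => PTree.noConfusion hc)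
      | some d, some d' => exact congrArg some (fwd_injective h)
    · intro e
      by_cases h : e.1.1 = leaf
      · exact ⟨none, (eq_dLeaf e h).symm⟩
      · obtain ⟨d, hd⟩ := fwd_surjective e h
        exact ⟨some d, hd⟩
  rw [← Fintype.sum_bijective _ hbij
    (fun o => φ (o.elim (dLeaf (graft k c)) fwd).1.1 *
      ∏ i ∈ Finset.range (leaves (o.elim (dLeaf (graft k c)) fwd).1.1),
        ψ ((o.elim (dLeaf (graft k c)) fwd).1.2 i))
    _ (fun o => rfl)]
  rw [Fintype.sum_option]
  congr 1
  · simp [dLeaf]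
  · refine Finset.sum_congr rfl fun d _ => ?_
    simp only [Option.elim]
    rw [prod_fwd, fwd_fst]

end CompLemmas
section ValueLemmas
open PTree Finset
variable {K : Type*} [Field K]

lemma arity_graft_iff {m k : ℕ} {c : Fin (k + 2) → PTree} :
    Arity m (graft k c) ↔ (k + 2 ≤ m ∧ ∀ i, Arity m (c i)) := Iff.rfl

lemma arity_leaf (m : ℕ) : Arity m leaf := trivial

lemma graft_eq_corolla_iff {m k : ℕ} {c : Fin (k + 2) → PTree} :
    (∃ k', k' + 2 ≤ m ∧ graft k c = corolla k') ↔ (k + 2 ≤ m ∧ ∀ i, c i = leaf) := by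
  constructor
  · rintro ⟨k', hk', he⟩
    rw [corolla] at he
    obtain ⟨rfl, hc⟩ := (graft.injEq _ _ _ _).mp he
    rw [heq_eq_eq] at hc
    exact ⟨hk', fun i => congrFun hc i⟩
  · rintro ⟨h1, h2⟩
    refine ⟨k, h1, ?_⟩
    rw [corolla]
    congr 1
    funext i
    exact h2 i

lemma fSeriesM_leaf (m : ℕ) : fSeriesM K m leaf = 1 := by
  rw [fSeriesM, if_pos (arity_leaf m)]

lemma fSeriesM_graft (m k : ℕ) (c : Fin (k + 2) → PTree) :
    fSeriesM K m (graft k c)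
      = (if k + 2 ≤ m then (1 : K) else 0) * ∏ i, fSeriesM K m (c i) := by
  classical
  simp only [fSeriesM]
  by_cases h1 : k + 2 ≤ m <;> by_cases h2 : ∀ i, Arity m (c i) <;>
    simp [arity_graft_iff, h1, h2, Finset.prod_boole]

lemma gSeriesM_leaf (m : ℕ) : gSeriesM K m leaf = 1 := by
  rw [gSeriesM, if_pos rfl]

open Classical in
lemma gSeriesM_graft (m k : ℕ) (c : Fin (k + 2) → PTree) :
    gSeriesM K m (graft k c)
      = -((if k + 2 ≤ m then (1 : K) else 0) * ∏ i, (if c i = leaf then (1 : K) else 0)) := by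
  classical
  rw [gSeriesM]
  rw [if_neg (fun hc => PTree.noConfusion hc)]
  by_cases h1 : k + 2 ≤ m <;> by_cases h2 : ∀ i, c i = leaf <;>
    simp [graft_eq_corolla_iff, h1, h2, Finset.prod_boole]

lemma tSeries_leaf : tSeries K leaf = 1 := by rw [tSeries, if_pos rfl]

lemma tSeries_graft (k : ℕ) (c : Fin (k + 2) → PTree) : tSeries K (graft k c) = 0 := by
  rw [tSeries, if_neg (fun hc => PTree.noConfusion hc)]

open Classical in
lemma tSeries_eq_ite (S : PTree) : tSeries K S = if S = leaf then 1 else 0 := rfl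

end ValueLemmas
set_option maxHeartbeats 1000000 in
open PTree Finset in
/-- In the completed free `m`-magmatic algebra on one generator,
the finite series `g(t) = t - Σ_{n=2}^m c_n(t)` and the series `f(t) = Σ_T T`
(sum over all `m`-ary planar trees) are mutually inverse for composition. -/
theorem fSeriesM_gSeriesM_comp_inverse (m : ℕ) (hm : 2 ≤ m) :
    compSeries K (fSeriesM K m) (gSeriesM K m) = tSeries K ∧
    compSeries K (gSeriesM K m) (fSeriesM K m) = tSeries K := by
  classical
  constructor
  · funext S
    induction S with
    | leaf => rw [compSeries_leaf, fSeriesM_leaf, gSeriesM_leaf, tSeries_leaf, one_mul]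
    | graft k c ih =>
        haveI : ∀ i, Finite (Decomp (c i)) := fun i => finite_decomp (c i)
        haveI : ∀ i, Fintype (Decomp (c i)) := fun i => Fintype.ofFinite _
        rw [compSeries_graft, finsum_eq_sum_of_fintype]
        have hterm : ∀ d : ∀ i, Decomp (c i),
            fSeriesM K m (graft k (fun i => (d i).1.1)) *
              ∏ j, ∏ r ∈ Finset.range (leaves (d j).1.1), gSeriesM K m ((d j).1.2 r)
            = (if k + 2 ≤ m then (1 : K) else 0) *
              ∏ j, (fSeriesM K m ((d j).1.1) *
                ∏ r ∈ Finset.range (leaves (d j).1.1), gSeriesM K m ((d j).1.2 r)) := by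
          intro d
          rw [fSeriesM_graft, Finset.prod_mul_distrib]
          ring
        have hsum1 : (∑ d : ∀ i, Decomp (c i), ∏ j,
              (fSeriesM K m ((d j).1.1) *
                ∏ r ∈ Finset.range (leaves (d j).1.1), gSeriesM K m ((d j).1.2 r)))
            = ∏ j, ∑ e : Decomp (c j), (fSeriesM K m (e.1.1) *
                ∏ r ∈ Finset.range (leaves e.1.1), gSeriesM K m (e.1.2 r)) :=
          (Fintype.prod_sum (κ := fun i => Decomp (c i)) (f := fun j e => fSeriesM K m (e.1.1) *
            ∏ r ∈ Finset.range (leaves e.1.1), gSeriesM K m (e.1.2 r))).symm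
        rw [Finset.sum_congr rfl (fun d _ => hterm d), ← Finset.mul_sum, hsum1]
        have hinner : ∀ j, (∑ e : Decomp (c j), fSeriesM K m (e.1.1) *
            ∏ r ∈ Finset.range (leaves e.1.1), gSeriesM K m (e.1.2 r))
            = tSeries K (c j) := by
          intro j
          rw [← ih j, compSeries_apply, finsum_eq_sum_of_fintype]
        rw [Finset.prod_congr rfl (fun j _ => hinner j),
          fSeriesM_leaf, one_mul, gSeriesM_graft, tSeries_graft,
          Finset.prod_congr rfl (fun j _ => tSeries_eq_ite (K := K) (c j))]
        ring
  · funext S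
    cases S with
    | leaf => rw [compSeries_leaf, fSeriesM_leaf, gSeriesM_leaf, tSeries_leaf, one_mul]
    | graft k c =>
        haveI : ∀ i, Finite (Decomp (c i)) := fun i => finite_decomp (c i)
        haveI : ∀ i, Fintype (Decomp (c i)) := fun i => Fintype.ofFinite _
        rw [compSeries_graft, finsum_eq_sum_of_fintype]
        have hterm : ∀ d : ∀ i, Decomp (c i),
            gSeriesM K m (graft k (fun i => (d i).1.1)) *
              ∏ j, ∏ r ∈ Finset.range (leaves (d j).1.1), fSeriesM K m ((d j).1.2 r)
            = -((if k + 2 ≤ m then (1 : K) else 0) *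
              ∏ j, ((if (d j).1.1 = leaf then (1 : K) else 0) *
                ∏ r ∈ Finset.range (leaves (d j).1.1), fSeriesM K m ((d j).1.2 r))) := by
          intro d
          rw [gSeriesM_graft, Finset.prod_mul_distrib]
          ring
        have hsum : (∑ d : ∀ i, Decomp (c i),
            gSeriesM K m (graft k (fun i => (d i).1.1)) *
              ∏ j, ∏ r ∈ Finset.range (leaves (d j).1.1), fSeriesM K m ((d j).1.2 r))
            = -((if k + 2 ≤ m then (1 : K) else 0) *
              ∏ j, ∑ e : Decomp (c j), ((if e.1.1 = leaf then (1 : K) else 0) *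
                ∏ r ∈ Finset.range (leaves e.1.1), fSeriesM K m (e.1.2 r))) := by
          have hsum1 : (∑ d : ∀ i, Decomp (c i), ∏ j,
                ((if (d j).1.1 = leaf then (1 : K) else 0) *
                  ∏ r ∈ Finset.range (leaves (d j).1.1), fSeriesM K m ((d j).1.2 r)))
              = ∏ j, ∑ e : Decomp (c j), ((if e.1.1 = leaf then (1 : K) else 0) *
                  ∏ r ∈ Finset.range (leaves e.1.1), fSeriesM K m (e.1.2 r)) :=
            (Fintype.prod_sum (κ := fun i => Decomp (c i)) (f := fun j e => (if e.1.1 = leaf then (1 : K) else 0) *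
              ∏ r ∈ Finset.range (leaves e.1.1), fSeriesM K m (e.1.2 r))).symm
          rw [Finset.sum_congr rfl (fun d _ => hterm d), Finset.sum_neg_distrib,
            ← Finset.mul_sum, hsum1]
        rw [hsum]
        have hinner : ∀ j, (∑ e : Decomp (c j), ((if e.1.1 = leaf then (1 : K) else 0) *
            ∏ r ∈ Finset.range (leaves e.1.1), fSeriesM K m (e.1.2 r)))
            = fSeriesM K m (c j) := by
          intro j
          rw [Fintype.sum_eq_single (dLeaf (c j))]
          · simp [dLeaf]
          · intro e he
            by_cases h : e.1.1 = leaf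
            · exact absurd (eq_dLeaf e h) he
            · simp [h]
        rw [Finset.prod_congr rfl (fun j _ => hinner j),
          gSeriesM_leaf, one_mul, fSeriesM_graft, tSeries_graft]
        ring
end
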